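/- arXiv:1608.01619 — 3 statements merged into one kernel-verified Lean document; each statement's English description precedes it below -/
import Mathlib

section
/- Let A be a real m×n matrix, b ∈ ℝ^m, and x ∈ ℝ^n. Set r = Ax − b, Ē = −(1/(1+xᵀx)) r xᵀ and f̄ = (1/(1+xᵀx)) r. Then (A + Ē)x = b + f̄, the m×(n+1) matrix (Ē | f̄) has rank at most one, and its Frobenius norm satisfies ‖(Ē | f̄)‖_F = √(‖Ē‖_F² + ‖f̄‖₂²) = η(x). -/
open Matrix BigOperators

/-- Euclidean norm of a vector in ℝ^k. -/
noncomputable def vnorm {k : ℕ} (v : Fin k → ℝ) : ℝ := Real.sqrt (∑ i, (v i) ^ 2)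

/-- Frobenius norm of a real matrix. -/
noncomputable def frob {m n : ℕ} (E : Matrix (Fin m) (Fin n) ℝ) : ℝ :=
  Real.sqrt (∑ i, ∑ j, (E i j) ^ 2)

/-- η(x) = ‖Ax − b‖₂ / √(1 + xᵀx). -/
noncomputable def eta {m n : ℕ} (A : Matrix (Fin m) (Fin n) ℝ) (b : Fin m → ℝ)
    (x : Fin n → ℝ) : ℝ := vnorm (A.mulVec x - b) / Real.sqrt (1 + x ⬝ᵥ x)

/-!
The corrections are rank one: `(Ē | f̄) = u wᵀ` with `u = r / (1 + xᵀx)` and `w = (−x, 1)`.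
Then `(A + Ē)x = Ax − (xᵀx) u = b + r − (xᵀx) u = b + u`, and
`‖(Ē | f̄)‖_F = ‖u‖₂ ‖w‖₂ = ‖r‖₂ / (1 + xᵀx) · √(1 + xᵀx) = η(x)`.
-/

theorem add_vecMulVec_neg_mulVec {R : Type*} [CommRing R] {m n : Type*} [Fintype n] (A : Matrix m n R) (b : m → R) (x : n → R) (u : m → R)
    (hu : (1 + x ⬝ᵥ x) • u = A *ᵥ x - b) :
    (A + vecMulVec u (-x)) *ᵥ x = b + u := by
  ext i
  have hi := congrFun hu i
  simp only [Pi.smul_apply, Pi.sub_apply, smul_eq_mul] at hi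
  simp only [add_mulVec, vecMulVec_mulVec, neg_dotProduct, Pi.add_apply, Pi.smul_apply,
    op_smul_eq_mul]
  linear_combination -hi

theorem of_snoc_vecMulVec {R : Type*} [Mul R] {m : Type*} {n : ℕ} (u : m → R) (v : Fin n → R)
    (a : R) :
    (Matrix.of fun i => Fin.snoc (vecMulVec u v i) (u i * a)) = vecMulVec u (Fin.snoc v a) := by
  ext i j
  refine Fin.lastCases ?_ (fun j => ?_) j <;> simp [vecMulVec_apply]

section Norms

variable {k m n : ℕ}

theorem vnorm_nonneg (v : Fin k → ℝ) : 0 ≤ vnorm v := Real.sqrt_nonneg _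

theorem vnorm_sq (v : Fin k → ℝ) : vnorm v ^ 2 = ∑ i, v i ^ 2 :=
  Real.sq_sqrt (by positivity)

theorem vnorm_sq_eq_dotProduct (v : Fin k → ℝ) : vnorm v ^ 2 = v ⬝ᵥ v := by
  simp only [vnorm_sq, dotProduct, ← sq]

theorem vnorm_neg (v : Fin k → ℝ) : vnorm (-v) = vnorm v := by
  simp only [vnorm, Pi.neg_apply, neg_sq]

theorem vnorm_smul (c : ℝ) (v : Fin k → ℝ) : vnorm (c • v) = |c| * vnorm v := by
  simp only [vnorm, Pi.smul_apply, smul_eq_mul, mul_pow, ← Finset.mul_sum]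
  rw [Real.sqrt_mul (sq_nonneg c), Real.sqrt_sq_eq_abs]

theorem vnorm_snoc_sq (v : Fin k → ℝ) (a : ℝ) :
    vnorm (Fin.snoc v a : Fin (k + 1) → ℝ) ^ 2 = vnorm v ^ 2 + a ^ 2 := by
  simp [vnorm_sq, Fin.sum_univ_castSucc]

theorem vnorm_snoc_neg_one (x : Fin k → ℝ) :
    vnorm (Fin.snoc (-x) 1 : Fin (k + 1) → ℝ) = Real.sqrt (1 + x ⬝ᵥ x) := by
  rw [← Real.sqrt_sq (vnorm_nonneg _), vnorm_snoc_sq, vnorm_neg, vnorm_sq_eq_dotProduct, one_pow,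
    add_comm]

theorem frob_nonneg (E : Matrix (Fin m) (Fin n) ℝ) : 0 ≤ frob E := Real.sqrt_nonneg _

theorem frob_sq (E : Matrix (Fin m) (Fin n) ℝ) : frob E ^ 2 = ∑ i, ∑ j, E i j ^ 2 :=
  Real.sq_sqrt (by positivity)

theorem frob_of_snoc_sq (E : Matrix (Fin m) (Fin n) ℝ) (f : Fin m → ℝ) :
    frob (Matrix.of fun i => Fin.snoc (E i) (f i)) ^ 2 = frob E ^ 2 + vnorm f ^ 2 := by
  simp only [frob_sq, vnorm_sq, Fin.sum_univ_castSucc, Matrix.of_apply, Fin.snoc_castSucc,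
    Fin.snoc_last, Finset.sum_add_distrib]

theorem frob_vecMulVec (u : Fin m → ℝ) (v : Fin n → ℝ) :
    frob (vecMulVec u v) = vnorm u * vnorm v := by
  rw [← Real.sqrt_sq (frob_nonneg _), ← Real.sqrt_sq (mul_nonneg (vnorm_nonneg u) (vnorm_nonneg v)),
    frob_sq, mul_pow, vnorm_sq, vnorm_sq, Finset.sum_mul_sum]
  simp only [vecMulVec_apply, mul_pow]

end Norms

theorem stmt_0 {m n : ℕ} (A : Matrix (Fin m) (Fin n) ℝ) (b : Fin m → ℝ) (x : Fin n → ℝ)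
    (r : Fin m → ℝ) (hr : r = A.mulVec x - b)
    (Ebar : Matrix (Fin m) (Fin n) ℝ)
    (hE : Ebar = Matrix.of fun i j => -(1 / (1 + x ⬝ᵥ x)) * (r i * x j))
    (fbar : Fin m → ℝ) (hf : fbar = fun i => (1 / (1 + x ⬝ᵥ x)) * r i) :
    (A + Ebar).mulVec x = b + fbar ∧
    (Matrix.of fun i => Fin.snoc (Ebar i) (fbar i)).rank ≤ 1 ∧
    frob (Matrix.of fun i => Fin.snoc (Ebar i) (fbar i)) =
      Real.sqrt (frob Ebar ^ 2 + vnorm fbar ^ 2) ∧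
    Real.sqrt (frob Ebar ^ 2 + vnorm fbar ^ 2) = eta A b x := by
  have hs : 0 < 1 + x ⬝ᵥ x := by
    rw [← vnorm_sq_eq_dotProduct]
    positivity
  set u := (1 + x ⬝ᵥ x)⁻¹ • r with hu
  have hfu : fbar = u := by
    ext i
    simp [hf, hu]
  have hEu : Ebar = vecMulVec u (-x) := by
    ext i j
    simp [hE, hu, vecMulVec_apply, mul_assoc]
  have hM : (Matrix.of fun i => Fin.snoc (Ebar i) (fbar i)) = vecMulVec u (Fin.snoc (-x) 1) := by
    simpa [hEu, hfu] using of_snoc_vecMulVec u (-x) 1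
  have hfrob : frob (Matrix.of fun i => Fin.snoc (Ebar i) (fbar i)) =
      Real.sqrt (frob Ebar ^ 2 + vnorm fbar ^ 2) := by
    rw [← frob_of_snoc_sq, Real.sqrt_sq (frob_nonneg _)]
  refine ⟨?_, ?_, hfrob, ?_⟩
  · rw [hEu, hfu]
    apply add_vecMulVec_neg_mulVec
    rw [hu, smul_inv_smul₀ hs.ne', hr]
  · rw [hM]
    exact rank_vecMulVec_le _ _
  · rw [← hfrob, hM, frob_vecMulVec, vnorm_snoc_neg_one, hu, vnorm_smul, abs_of_pos (inv_pos.2 hs), eta, ← hr]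
    have hsqrt : Real.sqrt (1 + x ⬝ᵥ x) ≠ 0 := (Real.sqrt_pos.2 hs).ne'
    field_simp
    rw [Real.sq_sqrt hs.le, mul_comm]
end

section
/- Let A be a real m×n matrix, b ∈ ℝ^m, and x ∈ ℝ^n. For every matrix E ∈ ℝ^{m×n} and vector f ∈ ℝ^m such that (A + E)x = b + f, one has √(‖E‖_F² + ‖f‖₂²) ≥ η(x). -/
open Matrix BigOperators

/-!
Since `(A + E) x = b + f`, the residual is `A x - b = f - E x`. Row by row, Cauchy–Schwarz in
`ℝ^{n+1}` for the vectors `(f i, -E i)` and `(1, x)` gives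
`(f i - ⟪E i, x⟫)² ≤ (f i² + ‖E i‖²)(1 + ‖x‖²)`; summing over the rows yields
`‖A x - b‖² ≤ ‖(E | f)‖_F² (1 + xᵀx)`.
-/

section CauchySchwarz

variable {ι κ : Type*} [Fintype ι] [Fintype κ]

theorem sq_add_dotProduct_le (c : ℝ) (u v : κ → ℝ) :
    (c + u ⬝ᵥ v) ^ 2 ≤ (c ^ 2 + u ⬝ᵥ u) * (1 + v ⬝ᵥ v) := by
  have := Finset.sum_mul_sq_le_sq_mul_sq Finset.univ
    (fun o : Option κ => o.elim c u) (fun o : Option κ => o.elim 1 v)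
  simpa [Fintype.sum_option, dotProduct, sq] using this

theorem sum_sq_sub_mulVec_le (E : Matrix ι κ ℝ) (f : ι → ℝ) (x : κ → ℝ) :
    ∑ i, (f - E *ᵥ x) i ^ 2 ≤ (∑ i, ∑ j, E i j ^ 2 + ∑ i, f i ^ 2) * (1 + x ⬝ᵥ x) := by
  calc ∑ i, (f - E *ᵥ x) i ^ 2
      = ∑ i, (f i + (-E i) ⬝ᵥ x) ^ 2 := by simp [mulVec, sub_eq_add_neg]
    _ ≤ ∑ i, (f i ^ 2 + (-E i) ⬝ᵥ (-E i)) * (1 + x ⬝ᵥ x) :=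
        Finset.sum_le_sum fun i _ => sq_add_dotProduct_le _ _ _
    _ = (∑ i, ∑ j, E i j ^ 2 + ∑ i, f i ^ 2) * (1 + x ⬝ᵥ x) := by
        simp only [dotProduct, Pi.neg_apply, ← sq, neg_sq]
        rw [← Finset.sum_mul, Finset.sum_add_distrib, add_comm]

end CauchySchwarz

theorem frob_sq_add_vnorm_sq {m n : ℕ} (E : Matrix (Fin m) (Fin n) ℝ) (f : Fin m → ℝ) :
    frob E ^ 2 + vnorm f ^ 2 = ∑ i, ∑ j, E i j ^ 2 + ∑ i, f i ^ 2 := by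
  rw [frob, vnorm, Real.sq_sqrt (by positivity), Real.sq_sqrt (by positivity)]

theorem stmt_1 {m n : ℕ} (A : Matrix (Fin m) (Fin n) ℝ) (b : Fin m → ℝ) (x : Fin n → ℝ)
    (E : Matrix (Fin m) (Fin n) ℝ) (f : Fin m → ℝ)
    (h : (A + E).mulVec x = b + f) :
    Real.sqrt (frob E ^ 2 + vnorm f ^ 2) ≥ eta A b x := by
  have hresidual : A *ᵥ x - b = f - E *ᵥ x := by
    rw [add_mulVec] at h
    rw [sub_eq_sub_iff_add_eq_add, h, add_comm]
  have hpos : 0 < 1 + x ⬝ᵥ x := by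
    have : 0 ≤ x ⬝ᵥ x := Finset.sum_nonneg fun j _ => mul_self_nonneg (x j)
    linarith
  rw [ge_iff_le, eta, div_le_iff₀ (Real.sqrt_pos.mpr hpos), ← Real.sqrt_mul (by positivity),
    frob_sq_add_vnorm_sq, vnorm, hresidual]
  exact Real.sqrt_le_sqrt (sum_sq_sub_mulVec_le E f x)
end

section
/- Let A be a real m×n matrix and b ∈ ℝ^m. For all x, h ∈ ℝ^n it holds f(x + h) = τ (f(x) + θ J(x) h), where θ = 1/(1 + μ(x)² (xᵀh)) and τ = (μ(x+h)/μ(x)) (1 + μ(x)² (xᵀh)), provided 1 + μ(x)²(xᵀh) ≠ 0. -/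
open Matrix BigOperators

/-- μ(x) = (1 + xᵀx)^(−1/2). -/
noncomputable def mu {n : ℕ} (x : Fin n → ℝ) : ℝ := 1 / Real.sqrt (1 + x ⬝ᵥ x)

/-- f(x) = μ(x)(Ax − b). -/
noncomputable def fTLS {m n : ℕ} (A : Matrix (Fin m) (Fin n) ℝ) (b : Fin m → ℝ)
    (x : Fin n → ℝ) : Fin m → ℝ := mu x • (A.mulVec x - b)

/-- Jacobian J(x) = μ(x) A − μ(x)³ (Ax − b) xᵀ. -/
noncomputable def jac {m n : ℕ} (A : Matrix (Fin m) (Fin n) ℝ) (b : Fin m → ℝ)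
    (x : Fin n → ℝ) : Matrix (Fin m) (Fin n) ℝ :=
  mu x • A - (mu x) ^ 3 • Matrix.vecMulVec (A.mulVec x - b) x

/-! The Jacobian term `J(x) h` cancels the part `μ(x)³ (xᵀh)(Ax − b)` of `(1 + μ(x)² xᵀh) f(x)`,
leaving `μ(x) (A(x + h) − b)`; rescaling by `μ(x + h) / μ(x)` gives `f(x + h)`. -/

theorem mu_pos {n : ℕ} (x : Fin n → ℝ) : 0 < mu x := by
  have hdot : 0 ≤ x ⬝ᵥ x := Finset.sum_nonneg fun j _ => mul_self_nonneg (x j)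
  unfold mu
  have := Real.sqrt_pos.mpr (by linarith : 0 < 1 + x ⬝ᵥ x)
  positivity

theorem jac_mulVec {m n : ℕ} (A : Matrix (Fin m) (Fin n) ℝ) (b : Fin m → ℝ)
    (x h : Fin n → ℝ) :
    jac A b x *ᵥ h = mu x • A *ᵥ h - (mu x ^ 3 * (x ⬝ᵥ h)) • (A *ᵥ x - b) := by
  rw [jac, sub_mulVec, smul_mulVec, smul_mulVec, vecMulVec_mulVec, op_smul_eq_smul, smul_smul]

theorem smul_fTLS_add_jac_mulVec {m n : ℕ} (A : Matrix (Fin m) (Fin n) ℝ) (b : Fin m → ℝ)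
    (x h : Fin n → ℝ) :
    (1 + mu x ^ 2 * (x ⬝ᵥ h)) • fTLS A b x + jac A b x *ᵥ h = mu x • (A *ᵥ (x + h) - b) := by
  rw [jac_mulVec, fTLS, mulVec_add]
  module

theorem stmt_4 {m n : ℕ} (A : Matrix (Fin m) (Fin n) ℝ) (b : Fin m → ℝ)
    (x h : Fin n → ℝ)
    (hne : 1 + (mu x) ^ 2 * (x ⬝ᵥ h) ≠ 0)
    (θ τ : ℝ)
    (hθ : θ = 1 / (1 + (mu x) ^ 2 * (x ⬝ᵥ h)))
    (hτ : τ = (mu (x + h) / mu x) * (1 + (mu x) ^ 2 * (x ⬝ᵥ h))) :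
    fTLS A b (x + h) = τ • (fTLS A b x + θ • (jac A b x).mulVec h) := by
  subst hθ hτ
  set c := 1 + mu x ^ 2 * (x ⬝ᵥ h)
  calc fTLS A b (x + h) = (mu (x + h) / mu x) • (mu x • (A *ᵥ (x + h) - b)) := by
        rw [smul_smul, div_mul_cancel₀ _ (mu_pos x).ne', fTLS]
    _ = (mu (x + h) / mu x) • (c • fTLS A b x + jac A b x *ᵥ h) := by
        rw [smul_fTLS_add_jac_mulVec]
    _ = (mu (x + h) / mu x * c) • (fTLS A b x + (1 / c) • jac A b x *ᵥ h) := by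
        rw [mul_smul, smul_add c, smul_smul, mul_one_div_cancel hne, one_smul]
end
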